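/- For parameters t¹, t² ∈ ℂ, the bilinear bracket on ℂ³ given by the matrix [[0, 1+t¹, 1],[0, 0, −1],[t², 0, 0]] (i.e., [f1,f3] = (1+t¹)f1, [f2,f3] = f1 − f2, [f1,f2] = t² f3) satisfies the Jacobi identity if and only if t¹·t² = 0. -/

import Mathlib

/-!
The Jacobiator `J(a, b, c)` of any bracket is alternating and trilinear, so on `ℂ³` it equals
`det(a, b, c) • J(f1, f2, f3)`. Here `J(f1, f2, f3) = -t¹t² f3`: the Jacobi identity holds exactly
when `t¹t² = 0`.
-/

/-- The bracket on `ℂ³` with matrix `[[0, 1+t¹, 1],[0, 0, −1],[t², 0, 0]]`: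
`[f1,f3] = (1+t¹) f1`, `[f2,f3] = f1 − f2`, `[f1,f2] = t² f3`. -/
def br (t1 t2 : ℂ) (u v : Fin 3 → ℂ) : Fin 3 → ℂ :=
  fun k =>
    if k = 0 then (1 + t1) * (u 0 * v 2 - u 2 * v 0) + (u 1 * v 2 - u 2 * v 1)
    else if k = 1 then -(u 1 * v 2 - u 2 * v 1)
    else t2 * (u 0 * v 1 - u 1 * v 0)

def jacobiator (t1 t2 : ℂ) (a b c : Fin 3 → ℂ) : Fin 3 → ℂ :=
  br t1 t2 (br t1 t2 a b) c + br t1 t2 (br t1 t2 b c) a + br t1 t2 (br t1 t2 c a) b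

theorem jacobiator_eq_det (t1 t2 : ℂ) (a b c : Fin 3 → ℂ) :
    jacobiator t1 t2 a b c = ![0, 0, -(t1 * t2) * (Matrix.of ![a, b, c]).det] := by
  funext k
  fin_cases k <;>
    simp [jacobiator, br, Matrix.det_fin_three] <;> ring

theorem jacobi_iff_t1t2_eq_zero (t1 t2 : ℂ) :
    (∀ a b c : Fin 3 → ℂ,
      br t1 t2 (br t1 t2 a b) c + br t1 t2 (br t1 t2 b c) a + br t1 t2 (br t1 t2 c a) b = 0) ↔
    t1 * t2 = 0 := by
  simp only [← jacobiator.eq_def, jacobiator_eq_det]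
  constructor
  · intro h
    have hthird := congrFun (h ![1, 0, 0] ![0, 1, 0] ![0, 0, 1]) 2
    simpa [Matrix.det_fin_three] using hthird
  · intro h a b c
    simp [h]
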